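/- Suppose 0 ≤ p_t^Γ(x,y) ≤ p_t(y-x) where ∫_{ℝ^d} p_t(z) dz = 1, p_t^Γ satisfies Chapman–Kolmogorov, and suppose |x| < 1, |y| ≤ 4 and p_1(x,y) ≥ c₀ > 0 whenever |x-y| < 5. If moreover P_x(τ_Γ > 1/2) ≤ C P_x(τ_Γ > 1), then p_1^Γ(x,y) ≤ c₀^{-1} C sup_w p_{1/2}(w) · P_x(τ_Γ > 1) p_1(x,y), where P_x(τ_Γ > s) := ∫ p_s^Γ(x,w) dw. In particular p_1^Γ(x,y) ≤ c P_x(τ_Γ > 1) p_1(x,y) for a constant c depending only on c₀, C and sup p_{1/2}. -/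

import Mathlib

/-!
Split `p_1^Γ(x,y)` by Chapman–Kolmogorov at time `1/2` and bound the second factor by
`sup p_{1/2} ≤ M`: this gives `p_1^Γ(x,y) ≤ M P_x(τ_Γ > 1/2) ≤ M C P_x(τ_Γ > 1)`. Since
`|x - y| < 5`, the factor `c₀⁻¹ p_1(x,y)` is at least `1`, so it may be inserted.
-/

open MeasureTheory Metric Real Set

theorem integral_mul_le_of_le_bound {α : Type*} [MeasurableSpace α] {μ : Measure α}
    {f g : α → ℝ} {M : ℝ} (hf : Integrable f μ) (hf₀ : ∀ w, 0 ≤ f w) (hg₀ : ∀ w, 0 ≤ g w)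
    (hgM : ∀ w, g w ≤ M) :
    ∫ w, f w * g w ∂μ ≤ M * ∫ w, f w ∂μ := by
  rw [← integral_const_mul]
  refine integral_mono_of_nonneg (.of_forall fun w => mul_nonneg (hf₀ w) (hg₀ w))
    (hf.const_mul M) (.of_forall fun w => ?_)
  simpa only [mul_comm M] using mul_le_mul_of_nonneg_left (hgM w) (hf₀ w)

theorem near_vertex_upper_bound_general (d : ℕ) (c₀ C M : ℝ)
    (hc₀ : 0 < c₀) (hM : 0 < M)
    (p : ℝ → EuclideanSpace ℝ (Fin d) → ℝ)
    (hpbdd : ∀ z, p (1 / 2) z ≤ M)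
    (pΓ : ℝ → EuclideanSpace ℝ (Fin d) → EuclideanSpace ℝ (Fin d) → ℝ)
    (hΓnn : ∀ t x y, 0 ≤ pΓ t x y)
    (hΓle : ∀ t : ℝ, 0 < t → ∀ x y, pΓ t x y ≤ p t (y - x))
    (hCK : ∀ x y, ∫ w, pΓ (1 / 2) x w * pΓ (1 / 2) w y = pΓ 1 x y)
    (hΓint : ∀ t : ℝ, 0 < t → ∀ x, Integrable (fun w => pΓ t x w))
    (hp1 : ∀ x y : EuclideanSpace ℝ (Fin d), ‖x - y‖ < 5 → c₀ ≤ p 1 (y - x))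
    (x y : EuclideanSpace ℝ (Fin d)) (hx : ‖x‖ < 1) (hy : ‖y‖ ≤ 4)
    (hsurv : (∫ w, pΓ (1 / 2) x w) ≤ C * ∫ w, pΓ 1 x w) :
    pΓ 1 x y ≤ c₀⁻¹ * C * M * (∫ w, pΓ 1 x w) * p 1 (y - x) := by
  have hxy : ‖x - y‖ < 5 := (norm_sub_le x y).trans_lt (by linarith)
  have hp1_lower : 1 ≤ c₀⁻¹ * p 1 (y - x) := (one_le_inv_mul₀ hc₀).2 (hp1 x y hxy)
  have hsurv_nonneg : 0 ≤ C * ∫ w, pΓ 1 x w :=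
    (integral_nonneg (hΓnn (1 / 2) x)).trans hsurv
  have hCK_bound : pΓ 1 x y ≤ M * ∫ w, pΓ (1 / 2) x w :=
    hCK x y ▸ integral_mul_le_of_le_bound (hΓint (1 / 2) (by norm_num) x) (hΓnn _ x)
      (fun w => hΓnn _ w y) (fun w => (hΓle (1 / 2) (by norm_num) w y).trans (hpbdd _))
  calc pΓ 1 x y ≤ M * (C * ∫ w, pΓ 1 x w) :=
        hCK_bound.trans (mul_le_mul_of_nonneg_left hsurv hM.le)
    _ ≤ (c₀⁻¹ * p 1 (y - x)) * (M * (C * ∫ w, pΓ 1 x w)) :=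
        le_mul_of_one_le_left (mul_nonneg hM.le hsurv_nonneg) hp1_lower
    _ = c₀⁻¹ * C * M * (∫ w, pΓ 1 x w) * p 1 (y - x) := by ring

/-- for `|x| < 1`, `|y| ≤ 4`, from Chapman–Kolmogorov,
boundedness `p_{1/2} ≤ M`, positivity `p_1(x,y) ≥ c₀` for `|x-y| < 5`, and
`P_x(τ_Γ > 1/2) ≤ C P_x(τ_Γ > 1)`, one gets
`p_1^Γ(x,y) ≤ c₀⁻¹ C M · P_x(τ_Γ > 1) p_1(x,y)`. -/
theorem near_vertex_upper_bound (d : ℕ) (hd : 1 ≤ d) (α c₀ C M : ℝ)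
    (hα₀ : 0 < α) (hα₂ : α < 2) (hc₀ : 0 < c₀) (hC : 0 < C) (hM : 0 < M)
    (p : ℝ → EuclideanSpace ℝ (Fin d) → ℝ)
    (hpnn : ∀ t : ℝ, 0 < t → ∀ z, 0 ≤ p t z)
    (hprob : ∀ t : ℝ, 0 < t → ∫ z, p t z = 1)
    (hpbdd : ∀ z, p (1 / 2) z ≤ M)
    (pΓ : ℝ → EuclideanSpace ℝ (Fin d) → EuclideanSpace ℝ (Fin d) → ℝ)
    (hΓnn : ∀ t x y, 0 ≤ pΓ t x y)
    (hΓle : ∀ t : ℝ, 0 < t → ∀ x y, pΓ t x y ≤ p t (y - x))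
    (hCK : ∀ x y, ∫ w, pΓ (1 / 2) x w * pΓ (1 / 2) w y = pΓ 1 x y)
    (hΓint : ∀ t : ℝ, 0 < t → ∀ x, Integrable (fun w => pΓ t x w))
    (hp1 : ∀ x y : EuclideanSpace ℝ (Fin d), ‖x - y‖ < 5 → c₀ ≤ p 1 (y - x))
    (x y : EuclideanSpace ℝ (Fin d)) (hx : ‖x‖ < 1) (hy : ‖y‖ ≤ 4)
    (hsurv : (∫ w, pΓ (1 / 2) x w) ≤ C * ∫ w, pΓ 1 x w) :
    pΓ 1 x y ≤ c₀⁻¹ * C * M * (∫ w, pΓ 1 x w) * p 1 (y - x) :=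
  near_vertex_upper_bound_general d c₀ C M hc₀ hM p hpbdd pΓ hΓnn hΓle hCK hΓint hp1 x y hx hy hsurv
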